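/- arXiv:1510.00743 — 3 statements merged into one kernel-verified Lean document; each statement's English description precedes it below -/
import Mathlib

section
/- The number of gaps equal to 2 in the cycle of gaps of Z mod p# (the primorial of p) is ∏_{2 < q ≤ p, q prime} (q - 2). Formally: for a prime p ≥ 3, the number of integers γ in {1,...,p#} such that both γ and γ + 2 are coprime to p# equals ∏_{q prime, 2 < q ≤ p} (q - 2). -/
open Finset

lemma prod_isUnit_iff {M N : Type*} [Monoid M] [Monoid N] (x : M × N) :
    IsUnit x ↔ IsUnit x.1 ∧ IsUnit x.2 :=
  isUnit_iff_exists.trans (by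
    constructor
    · rintro ⟨b, h1, h2⟩
      exact ⟨isUnit_iff_exists.mpr ⟨b.1, congrArg Prod.fst h1, congrArg Prod.fst h2⟩,
        isUnit_iff_exists.mpr ⟨b.2, congrArg Prod.snd h1, congrArg Prod.snd h2⟩⟩
    · rintro ⟨h1, h2⟩
      obtain ⟨b1, hb1, hb1'⟩ := isUnit_iff_exists.mp h1
      obtain ⟨b2, hb2, hb2'⟩ := isUnit_iff_exists.mp h2
      exact ⟨(b1, b2), Prod.ext hb1 hb2, Prod.ext hb1' hb2'⟩)

lemma ringEquiv_isUnit_iff {R S : Type*} [CommRing R] [CommRing S] (e : R ≃+* S) (x : R) :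
    IsUnit (e x) ↔ IsUnit x := by
  constructor
  · intro h; simpa using h.map e.symm.toRingHom
  · intro h; exact h.map e.toRingHom

def tcount (n : ℕ) : ℕ :=
  ((Finset.range n).filter (fun γ => Nat.Coprime γ n ∧ Nat.Coprime (γ + 2) n)).card

lemma tcount_eq_zmod (n : ℕ) [NeZero n] :
    tcount n = (Finset.univ.filter (fun x : ZMod n => IsUnit x ∧ IsUnit (x + 2))).card := by
  unfold tcount
  refine Finset.card_bij' (fun γ _ => ((γ : ZMod n))) (fun x _ => x.val) ?_ ?_ ?_ ?_
  · intro γ hγ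
    simp only [mem_filter, mem_range] at hγ ⊢
    refine ⟨mem_univ _, (ZMod.isUnit_iff_coprime γ n).mpr hγ.2.1, ?_⟩
    have := (ZMod.isUnit_iff_coprime (γ + 2) n).mpr hγ.2.2
    push_cast at this
    exact this
  · intro x hx
    simp only [mem_filter, mem_univ, true_and] at hx
    simp only [mem_filter, mem_range]
    refine ⟨ZMod.val_lt x, ?_, ?_⟩
    · rw [← ZMod.isUnit_iff_coprime, ZMod.natCast_val, ZMod.cast_id]
      exact hx.1
    · rw [← ZMod.isUnit_iff_coprime]
      push_cast
      rw [ZMod.natCast_val, ZMod.cast_id]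
      exact hx.2
  · intro γ hγ
    simp only [mem_filter, mem_range] at hγ
    exact ZMod.val_cast_of_lt hγ.1
  · intro x hx
    simp [ZMod.natCast_val, ZMod.cast_id]

lemma zfilter_mul (m n : ℕ) [NeZero m] [NeZero n] (h : Nat.Coprime m n) :
    (Finset.univ.filter (fun x : ZMod (m * n) => IsUnit x ∧ IsUnit (x + 2))).card =
    (Finset.univ.filter (fun x : ZMod m => IsUnit x ∧ IsUnit (x + 2))).card *
    (Finset.univ.filter (fun x : ZMod n => IsUnit x ∧ IsUnit (x + 2))).card := by
  haveI : NeZero (m * n) := ⟨mul_ne_zero (NeZero.ne m) (NeZero.ne n)⟩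
  let e := ZMod.chineseRemainder h
  have key : ∀ x : ZMod (m * n), (IsUnit x ∧ IsUnit (x + 2)) ↔
      ((IsUnit (e x).1 ∧ IsUnit ((e x).1 + 2)) ∧ (IsUnit (e x).2 ∧ IsUnit ((e x).2 + 2))) := by
    intro x
    have hu : ∀ y : ZMod (m * n), IsUnit y ↔ IsUnit (e y).1 ∧ IsUnit (e y).2 := by
      intro y
      rw [← ringEquiv_isUnit_iff e y, prod_isUnit_iff]
    have he2 : e (x + 2) = ((e x).1 + 2, (e x).2 + 2) := by
      have : e (x + 2) = e x + e 2 := map_add e x 2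
      rw [this, map_ofNat]
      rfl
    rw [hu x, hu (x + 2), he2]
    tauto
  rw [← Finset.card_product]
  refine Finset.card_bij' (fun x _ => e x) (fun y _ => e.symm y) ?_ ?_ ?_ ?_
  · intro x hx
    simp only [mem_filter, mem_univ, true_and] at hx
    rw [Finset.mem_product]
    simp only [mem_filter, mem_univ, true_and]
    exact (key x).mp hx
  · intro y hy
    rw [Finset.mem_product] at hy
    simp only [mem_filter, mem_univ, true_and] at hy ⊢
    rw [key]
    simpa using hy
  · intro x _; exact e.symm_apply_apply x
  · intro y _; exact e.apply_symm_apply y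

lemma tcount_mul (m n : ℕ) (hm : m ≠ 0) (hn : n ≠ 0) (h : Nat.Coprime m n) :
    tcount (m * n) = tcount m * tcount n := by
  haveI : NeZero m := ⟨hm⟩
  haveI : NeZero n := ⟨hn⟩
  haveI : NeZero (m * n) := ⟨mul_ne_zero hm hn⟩
  rw [tcount_eq_zmod, tcount_eq_zmod, tcount_eq_zmod, zfilter_mul m n h]

lemma tcount_prime (q : ℕ) (hq : q.Prime) (h2 : 2 < q) : tcount q = q - 2 := by
  haveI : Fact q.Prime := ⟨hq⟩
  rw [tcount_eq_zmod]
  have hset : (Finset.univ.filter (fun x : ZMod q => IsUnit x ∧ IsUnit (x + 2))) =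
      Finset.univ \ {0, -2} := by
    ext x
    simp only [mem_filter, mem_univ, true_and, mem_sdiff, mem_insert, mem_singleton]
    rw [isUnit_iff_ne_zero, isUnit_iff_ne_zero]
    constructor
    · rintro ⟨h1, h2⟩
      push_neg
      refine ⟨h1, fun hx => h2 ?_⟩
      rw [hx]; ring
    · rintro h
      push_neg at h
      refine ⟨h.1, fun hx => h.2 ?_⟩
      linear_combination hx
  rw [hset, Finset.card_sdiff_of_subset (by simp), Finset.card_univ, ZMod.card]
  have h02 : (0 : ZMod q) ≠ -2 := by
    intro hh
    have h2z : (2 : ZMod q) = 0 := by rw [← neg_eq_zero]; exact hh.symm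
    have : ((2 : ℕ) : ZMod q) = 0 := by push_cast; exact h2z
    rw [ZMod.natCast_eq_zero_iff] at this
    have := Nat.le_of_dvd (by norm_num) this
    omega
  rw [Finset.card_insert_of_notMem (by simpa using h02), Finset.card_singleton]

lemma tcount_two : tcount 2 = 1 := by decide

lemma tcount_one : tcount 1 = 1 := by decide

lemma tcount_prod (s : Finset ℕ) (h : ∀ q ∈ s, q.Prime) :
    tcount (∏ q ∈ s, q) = ∏ q ∈ s, tcount q := by
  induction s using Finset.induction_on with
  | empty => simpa using tcount_one
  | @insert a s ha ih =>
    rw [Finset.prod_insert ha, Finset.prod_insert ha,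
      tcount_mul a _ (h a (Finset.mem_insert_self a s)).ne_zero
        (Finset.prod_ne_zero_iff.mpr fun q hq => (h q (Finset.mem_insert_of_mem hq)).ne_zero)
        (Nat.Coprime.prod_right fun q hq =>
          (Nat.coprime_primes (h a (Finset.mem_insert_self a s))
            (h q (Finset.mem_insert_of_mem hq))).mpr (fun he => ha (he ▸ hq))),
      ih (fun q hq => h q (Finset.mem_insert_of_mem hq))]

/-- The number of gaps equal to 2 in the cycle of gaps of Z mod p# is ∏_{2<q≤p} (q-2). -/
theorem stmt_6 (p : ℕ) (hp : p.Prime) (h3 : 3 ≤ p) :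
    ((Finset.Icc 1 (primorial p)).filter
      (fun γ => Nat.Coprime γ (primorial p) ∧ Nat.Coprime (γ + 2) (primorial p))).card =
    ∏ q ∈ (Finset.range (p + 1)).filter (fun q => q.Prime ∧ 2 < q), (q - 2) := by
  have hN2 : 2 ≤ primorial p := by
    have h2mem : 2 ∈ (Finset.range (p + 1)).filter Nat.Prime := by
      simp only [Finset.mem_filter, Finset.mem_range]
      exact ⟨by omega, Nat.prime_two⟩
    exact Finset.single_le_prod' (fun q hq => ((Finset.mem_filter.mp hq).2).one_lt.le) h2mem
  have hfilt : ((Finset.Icc 1 (primorial p)).filter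
      (fun γ => Nat.Coprime γ (primorial p) ∧ Nat.Coprime (γ + 2) (primorial p))) =
      ((Finset.range (primorial p)).filter
      (fun γ => Nat.Coprime γ (primorial p) ∧ Nat.Coprime (γ + 2) (primorial p))) := by
    ext γ
    simp only [Finset.mem_filter, Finset.mem_Icc, Finset.mem_range]
    constructor
    · rintro ⟨⟨h1, h2⟩, hc⟩
      refine ⟨?_, hc⟩
      rcases lt_or_eq_of_le h2 with h | h
      · exact h
      · exfalso
        have := hc.1
        rw [h] at this
        unfold Nat.Coprime at this
        rw [Nat.gcd_self] at this
        omega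
    · rintro ⟨h1, hc⟩
      refine ⟨⟨?_, le_of_lt h1⟩, hc⟩
      rcases Nat.eq_zero_or_pos γ with h | h
      · exfalso
        have := hc.1
        rw [h, Nat.coprime_zero_left] at this
        omega
      · exact h
  rw [hfilt]
  have hT : ((Finset.range (primorial p)).filter
      (fun γ => Nat.Coprime γ (primorial p) ∧ Nat.Coprime (γ + 2) (primorial p))).card
      = tcount (primorial p) := rfl
  rw [hT, primorial, tcount_prod _ (fun q hq => (Finset.mem_filter.mp hq).2)]
  have hsplit : (Finset.range (p + 1)).filter Nat.Prime =
      insert 2 ((Finset.range (p + 1)).filter (fun q => q.Prime ∧ 2 < q)) := by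
    ext q
    simp only [Finset.mem_filter, Finset.mem_insert, Finset.mem_range]
    constructor
    · rintro ⟨hr, hq⟩
      rcases Nat.lt_or_ge q 3 with h | h
      · left; have := hq.two_le; omega
      · right; exact ⟨hr, hq, by omega⟩
    · rintro (rfl | ⟨hr, hq, _⟩)
      · exact ⟨by omega, Nat.prime_two⟩
      · exact ⟨hr, hq⟩
  rw [hsplit, Finset.prod_insert (by simp), tcount_two, one_mul]
  exact Finset.prod_congr rfl fun q hq => by
    obtain ⟨_, hq, h2⟩ := Finset.mem_filter.mp hq
    exact tcount_prime q hq h2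
end

section
/- For a prime p ≥ 3 and an even integer g ≥ 2, the number of γ ∈ {1,...,p#} with gcd(γ, p#) = 1 and gcd(γ + g, p#) = 1 equals ∏_{q prime, 2 < q ≤ p, q ∤ g} (q - 2) · ∏_{q prime, 2 < q ≤ p, q ∣ g} (q - 1). -/
open Finset

noncomputable def NN (g n : ℕ) : ℕ := Nat.card {x : ZMod n // IsUnit x ∧ IsUnit (x + (g : ZMod n))}

lemma NN_mul (g m n : ℕ) (h : Nat.Coprime m n) : NN g (m * n) = NN g m * NN g n := by
  have e := ZMod.chineseRemainder h
  rw [NN, NN, NN, ← Nat.card_prod]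
  apply Nat.card_congr
  refine (Equiv.subtypeEquiv e.toEquiv (fun x => ?_)).trans
    (Equiv.subtypeProdEquivProd (p := fun a : ZMod m => IsUnit a ∧ IsUnit (a + g))
      (q := fun b : ZMod n => IsUnit b ∧ IsUnit (b + g)))
  have h1 : ∀ y : ZMod (m * n), IsUnit y ↔ IsUnit (e y) := fun y =>
    ⟨fun hy => hy.map e, fun hy => by simpa using hy.map e.symm⟩
  have h2 : (e (x + g)).1 = (e x).1 + (g : ZMod m) := by
    simp [map_add, map_natCast]
  have h3 : (e (x + g)).2 = (e x).2 + (g : ZMod n) := by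
    simp [map_add, map_natCast]
  constructor
  · rintro ⟨hu, hv⟩
    rw [h1] at hu
    rw [h1] at hv
    rw [prod_isUnit_iff] at hu hv
    rw [h2, h3] at hv
    exact ⟨⟨hu.1, hv.1⟩, hu.2, hv.2⟩
  · rintro ⟨⟨hu1, hv1⟩, hu2, hv2⟩
    rw [h1, prod_isUnit_iff]
    rw [h1, prod_isUnit_iff, h2, h3]
    exact ⟨⟨hu1, hu2⟩, hv1, hv2⟩

lemma NN_eq_card (g n : ℕ) [NeZero n] :
    NN g n = (Finset.univ.filter (fun x : ZMod n => IsUnit x ∧ IsUnit (x + (g : ZMod n)))).card := by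
  rw [NN, Nat.card_eq_fintype_card, Fintype.card_subtype]

lemma NN_prime_dvd (g q : ℕ) (hq : q.Prime) (hdvd : q ∣ g) : NN g q = q - 1 := by
  haveI := Fact.mk hq
  have hg : (g : ZMod q) = 0 := (ZMod.natCast_eq_zero_iff g q).mpr hdvd
  rw [NN_eq_card, hg]
  have : (Finset.univ.filter (fun x : ZMod q => IsUnit x ∧ IsUnit (x + 0))) = ({0} : Finset (ZMod q))ᶜ := by
    ext x
    simp [isUnit_iff_ne_zero]
  rw [this, Finset.card_compl, ZMod.card]
  simp

lemma NN_prime_not_dvd (g q : ℕ) (hq : q.Prime) (hdvd : ¬ q ∣ g) : NN g q = q - 2 := by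
  haveI := Fact.mk hq
  have hg : (g : ZMod q) ≠ 0 := fun h => hdvd ((ZMod.natCast_eq_zero_iff g q).mp h)
  rw [NN_eq_card]
  have : (Finset.univ.filter (fun x : ZMod q => IsUnit x ∧ IsUnit (x + (g : ZMod q))))
      = ({0, -(g : ZMod q)} : Finset (ZMod q))ᶜ := by
    ext x
    simp only [Finset.mem_filter, Finset.mem_univ, true_and, Finset.mem_compl,
      Finset.mem_insert, Finset.mem_singleton, isUnit_iff_ne_zero, not_or]
    constructor
    · rintro ⟨h1, h2⟩
      exact ⟨h1, fun h => h2 (by rw [h]; ring)⟩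
    · rintro ⟨h1, h2⟩
      exact ⟨h1, fun h => h2 (by linear_combination h)⟩
  rw [this, Finset.card_compl, ZMod.card]
  rw [Finset.card_insert_of_notMem (by simpa using hg), Finset.card_singleton]

lemma card_Icc_eq_NN (g n : ℕ) (hn : 1 < n) :
    ((Finset.Icc 1 n).filter
      (fun γ => Nat.Coprime γ n ∧ Nat.Coprime (γ + g) n)).card = NN g n := by
  haveI : NeZero n := ⟨by omega⟩
  rw [NN_eq_card]
  refine Finset.card_bij (fun γ _ => (γ : ZMod n)) ?_ ?_ ?_
  · intro γ hγ
    simp only [Finset.mem_filter, Finset.mem_Icc] at hγ ⊢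
    refine ⟨Finset.mem_univ _, (ZMod.isUnit_iff_coprime γ n).mpr hγ.2.1, ?_⟩
    have : ((γ + g : ℕ) : ZMod n) = (γ : ZMod n) + g := by push_cast; ring
    rw [← this]
    exact (ZMod.isUnit_iff_coprime (γ + g) n).mpr hγ.2.2
  · intro γ₁ h₁ γ₂ h₂ hc
    simp only [Finset.mem_filter, Finset.mem_Icc] at h₁ h₂
    have l₁ : γ₁ < n := by
      rcases Nat.lt_or_ge γ₁ n with h | h
      · exact h
      · exfalso
        have he : γ₁ = n := le_antisymm h₁.1.2 h
        have hcop := h₁.2.1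
        rw [he, Nat.Coprime, Nat.gcd_self] at hcop
        omega
    have l₂ : γ₂ < n := by
      rcases Nat.lt_or_ge γ₂ n with h | h
      · exact h
      · exfalso
        have he : γ₂ = n := le_antisymm h₂.1.2 h
        have hcop := h₂.2.1
        rw [he, Nat.Coprime, Nat.gcd_self] at hcop
        omega
    have := (ZMod.natCast_eq_natCast_iff' γ₁ γ₂ n).mp hc
    rwa [Nat.mod_eq_of_lt l₁, Nat.mod_eq_of_lt l₂] at this
  · intro x hx
    simp only [Finset.mem_filter, Finset.mem_univ, true_and] at hx
    have hx0 : x ≠ 0 := by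
      intro hxx
      have h1 := hx.1
      rw [hxx, isUnit_zero_iff] at h1
      haveI := Fact.mk hn
      have h2 : ZMod.val (0 : ZMod n) = ZMod.val (1 : ZMod n) := by rw [h1]
      rw [ZMod.val_zero, ZMod.val_one] at h2
      omega
    refine ⟨x.val, ?_, ?_⟩
    · simp only [Finset.mem_filter, Finset.mem_Icc]
      have hv : (x.val : ZMod n) = x := ZMod.natCast_rightInverse x
      refine ⟨⟨?_, le_of_lt (ZMod.val_lt x)⟩, ?_, ?_⟩
      · have : x.val ≠ 0 := fun h => hx0 (by rw [← hv, h, Nat.cast_zero])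
        omega
      · rw [← ZMod.isUnit_iff_coprime, hv]; exact hx.1
      · rw [← ZMod.isUnit_iff_coprime]
        have : ((x.val + g : ℕ) : ZMod n) = x + g := by push_cast [hv]; ring
        rw [this]; exact hx.2
    · exact ZMod.natCast_rightInverse x

lemma NN_one (g : ℕ) : NN g 1 = 1 := by
  rw [NN_eq_card]
  have : (Finset.univ.filter (fun x : ZMod 1 => IsUnit x ∧ IsUnit (x + (g : ZMod 1)))) = Finset.univ := by
    ext x; simp only [Finset.mem_filter, Finset.mem_univ, true_and, isUnit_of_subsingleton, and_self]
  rw [this]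
  simp

lemma NN_prod (g : ℕ) (s : Finset ℕ) (hs : ∀ q ∈ s, q.Prime) :
    NN g (∏ q ∈ s, q) = ∏ q ∈ s, NN g q := by
  induction s using Finset.cons_induction with
  | empty => simpa using NN_one g
  | cons a s ha ih =>
    rw [Finset.prod_cons, Finset.prod_cons, NN_mul, ih (fun q hq => hs q (Finset.mem_cons_of_mem hq))]
    refine Nat.Coprime.prod_right (fun q hq => ?_)
    refine (Nat.coprime_primes (hs a (Finset.mem_cons_self a s))
      (hs q (Finset.mem_cons_of_mem hq))).mpr ?_
    rintro rfl
    exact ha hq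

/-- Count of pairs of units at even distance g mod p#:
∏_{2<q≤p, q∤g} (q-2) · ∏_{2<q≤p, q∣g} (q-1). -/
theorem stmt_8 (p : ℕ) (hp : p.Prime) (h3 : 3 ≤ p) (g : ℕ) (hg : 2 ≤ g) (heven : 2 ∣ g) :
    ((Finset.Icc 1 (primorial p)).filter
      (fun γ => Nat.Coprime γ (primorial p) ∧ Nat.Coprime (γ + g) (primorial p))).card =
    (∏ q ∈ (Finset.range (p + 1)).filter (fun q => q.Prime ∧ 2 < q ∧ ¬ q ∣ g), (q - 2)) *
    (∏ q ∈ (Finset.range (p + 1)).filter (fun q => q.Prime ∧ 2 < q ∧ q ∣ g), (q - 1)) := by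
  set S := (Finset.range (p + 1)).filter Nat.Prime with hS
  have hSp : ∀ q ∈ S, q.Prime := fun q hq => (Finset.mem_filter.mp hq).2
  have hprim : primorial p = ∏ q ∈ S, q := rfl
  have h2S : 2 ∈ S := by
    simp only [hS, Finset.mem_filter, Finset.mem_range]
    exact ⟨by omega, Nat.prime_two⟩
  have hlt : 1 < primorial p := by
    rw [hprim]
    calc 1 < 2 := one_lt_two
    _ ≤ ∏ q ∈ S, q := Finset.single_le_prod' (fun q hq => (hSp q hq).one_lt.le) h2S
  rw [card_Icc_eq_NN g _ hlt, hprim, NN_prod g S hSp]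
  rw [← Finset.prod_filter_mul_prod_filter_not S (fun q => q ∣ g)]
  rw [mul_comm]
  congr 1
  · -- not dvd side
    rw [Finset.prod_congr rfl (fun q hq => NN_prime_not_dvd g q
      (hSp q (Finset.mem_filter.mp hq).1) (Finset.mem_filter.mp hq).2)]
    apply Finset.prod_congr _ (fun _ _ => rfl)
    ext q
    simp only [hS, Finset.mem_filter, Finset.mem_range]
    constructor
    · rintro ⟨⟨hq1, hq2⟩, hq3⟩
      refine ⟨hq1, hq2, ?_, hq3⟩
      rcases hq2.two_le.lt_or_eq with h | h
      · exact h
      · exact absurd (h ▸ heven) hq3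
    · rintro ⟨hq1, hq2, _, hq3⟩
      exact ⟨⟨hq1, hq2⟩, hq3⟩
  · -- dvd side
    rw [Finset.prod_congr rfl (fun q hq => NN_prime_dvd g q
      (hSp q (Finset.mem_filter.mp hq).1) (Finset.mem_filter.mp hq).2)]
    rw [← Finset.prod_filter_mul_prod_filter_not (S.filter (fun q => q ∣ g)) (fun q => 2 < q)]
    have hone : ∏ q ∈ (S.filter (fun q => q ∣ g)).filter (fun q => ¬ 2 < q), (q - 1) = 1 := by
      apply Finset.prod_eq_one
      intro q hq
      simp only [Finset.mem_filter] at hq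
      have := (hSp q hq.1.1).two_le
      omega
    rw [hone, mul_one]
    apply Finset.prod_congr _ (fun _ _ => rfl)
    ext q
    simp only [hS, Finset.mem_filter, Finset.mem_range]
    tauto
end

section
/- Eigenstructure of the population transfer matrix: let J ≥ 1 and for a real parameter p > J + 1 define the J×J upper bidiagonal matrix M(p) with diagonal entries M(p)_{jj} = (p - j - 1)/(p - 2) for j = 1,...,J and superdiagonal entries M(p)_{j,j+1} = j/(p - 2). Let L be the J×J upper-triangular Pascal matrix L_{ij} = C(j-1, i-1) for i ≤ j, and R the signed Pascal matrix R_{ij} = (-1)^{i+j} C(j-1, i-1) for i ≤ j. Then L·R = I and M(p) = R · diag(1, (p-3)/(p-2), ..., (p-J-1)/(p-2)) · L. -/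
open Finset

lemma altR (n : ℕ) : ∑ m ∈ Finset.range (n+1), (-1:ℝ)^m * (n.choose m : ℝ)
    = if n = 0 then 1 else 0 := by
  have h := Int.alternating_sum_range_choose (n := n)
  have h2 := congrArg (Int.cast : ℤ → ℝ) h
  push_cast at h2
  split_ifs with h0 <;> simp_all

lemma coreR (i j : ℕ) :
    ∑ k ∈ Finset.range (j+1),
      (if i ≤ k then (-1:ℝ)^(i+k) * (k.choose i : ℝ) * (j.choose k : ℝ) else 0)
      = if i = j then 1 else 0 := by
  by_cases hij : i ≤ j
  · have hsub : Finset.Ico i (j+1) ⊆ Finset.range (j+1) := by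
      intro k hk
      simp only [Finset.mem_Ico] at hk
      simp only [Finset.mem_range]
      omega
    rw [← Finset.sum_subset hsub (by
      intro k hk hk2
      simp only [Finset.mem_range] at hk
      simp only [Finset.mem_Ico] at hk2
      rw [if_neg (by omega)])]
    rw [Finset.sum_Ico_eq_sum_range]
    have hrange : j + 1 - i = (j - i) + 1 := by omega
    rw [hrange]
    have hcongr : ∀ m ∈ Finset.range ((j-i)+1),
        (if i ≤ i + m then (-1:ℝ)^(i+(i+m)) * ((i+m).choose i : ℝ) * (j.choose (i+m) : ℝ) else 0)
        = (j.choose i : ℝ) * ((-1:ℝ)^m * ((j-i).choose m : ℝ)) := by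
      intro m hm
      simp only [Finset.mem_range] at hm
      rw [if_pos (Nat.le_add_right i m)]
      have hc : j.choose (i+m) * (i+m).choose i = j.choose i * (j-i).choose m := by
        have h := Nat.choose_mul (n := j) (k := i+m) (s := i) (by omega)
        simpa using h
      have hcR : (j.choose (i+m) : ℝ) * ((i+m).choose i : ℝ)
          = (j.choose i : ℝ) * ((j-i).choose m : ℝ) := by exact_mod_cast hc
      have hsign : (-1:ℝ)^(i+(i+m)) = (-1:ℝ)^m := by
        rw [show i+(i+m) = 2*i+m by ring, pow_add, pow_mul]; norm_num
      rw [hsign]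
      linear_combination (-1:ℝ)^m * hcR
    rw [Finset.sum_congr rfl hcongr, ← Finset.mul_sum, altR]
    by_cases h0 : j - i = 0
    · have hij' : i = j := by omega
      simp [hij', h0]
    · simp [h0, if_neg (show ¬ i = j by omega)]
  · rw [if_neg (by omega)]
    apply Finset.sum_eq_zero
    intro k hk
    simp only [Finset.mem_range] at hk
    rw [if_neg (by omega)]

lemma core2R (i j : ℕ) :
    ∑ k ∈ Finset.range (j+1),
      (if i ≤ k then (-1:ℝ)^(i+k) * (k:ℝ) * (k.choose i : ℝ) * (j.choose k : ℝ) else 0)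
      = (if i = j then (i:ℝ) else 0) - (if i + 1 = j then (i:ℝ) + 1 else 0) := by
  have hsplit : ∀ k ∈ Finset.range (j+1),
      (if i ≤ k then (-1:ℝ)^(i+k) * (k:ℝ) * (k.choose i : ℝ) * (j.choose k : ℝ) else 0)
      = (i:ℝ) * (if i ≤ k then (-1:ℝ)^(i+k) * (k.choose i : ℝ) * (j.choose k : ℝ) else 0)
        + (-1) * (if i+1 ≤ k then
            (-1:ℝ)^(i+1+k) * ((i:ℝ)+1) * (k.choose (i+1) : ℝ) * (j.choose k : ℝ) else 0) := by
    intro k _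
    by_cases h1 : i + 1 ≤ k
    · rw [if_pos (by omega), if_pos (by omega), if_pos h1]
      have hn : k.choose (i+1) * (i+1) = k.choose i * (k - i) := Nat.choose_succ_right_eq k i
      have hnR : (k.choose (i+1) : ℝ) * ((i:ℝ)+1) = (k.choose i : ℝ) * ((k:ℝ) - i) := by
        have h := congrArg (Nat.cast : ℕ → ℝ) hn
        push_cast [Nat.cast_sub (show i ≤ k by omega)] at h
        linarith [h]
      have hsgn : (-1:ℝ)^(i+1+k) = -(-1:ℝ)^(i+k) := by
        rw [show i+1+k = (i+k)+1 by ring, pow_succ]; ring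
      rw [hsgn]
      linear_combination (-((-1:ℝ)^(i+k))) * (j.choose k : ℝ) * hnR
    · by_cases h0 : i ≤ k
      · have hk : k = i := by omega
        subst hk
        rw [if_pos le_rfl, if_pos le_rfl, if_neg h1]
        ring
      · rw [if_neg h0, if_neg h0, if_neg h1]; ring
  rw [Finset.sum_congr rfl hsplit, Finset.sum_add_distrib, ← Finset.mul_sum, ← Finset.mul_sum,
    coreR]
  have h2 : ∑ k ∈ Finset.range (j+1),
      (if i+1 ≤ k then (-1:ℝ)^(i+1+k) * ((i:ℝ)+1) * (k.choose (i+1) : ℝ) * (j.choose k : ℝ) else 0)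
      = ((i:ℝ)+1) * (if i+1 = j then 1 else 0) := by
    rw [← coreR (i+1) j, Finset.mul_sum]
    apply Finset.sum_congr rfl
    intro k _
    split_ifs with h
    · ring
    · ring
  rw [h2]
  split_ifs <;> ring

/-- Eigenstructure of the normalized population transfer matrix M(p):
L·R = I and M(p) = R · diag((p-j-1)/(p-2)) · L with Pascal matrices L, R. -/
theorem stmt_11 (J : ℕ) (hJ : 1 ≤ J) (p : ℝ) (hp : (J : ℝ) + 1 < p) :
    let M : Matrix (Fin J) (Fin J) ℝ := fun i j =>
      if (j : ℕ) = (i : ℕ) then (p - ((i : ℕ) : ℝ) - 2) / (p - 2)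
      else if (j : ℕ) = (i : ℕ) + 1 then (((i : ℕ) : ℝ) + 1) / (p - 2) else 0
    let L : Matrix (Fin J) (Fin J) ℝ := fun i j =>
      if (i : ℕ) ≤ (j : ℕ) then (Nat.choose (j : ℕ) (i : ℕ) : ℝ) else 0
    let R : Matrix (Fin J) (Fin J) ℝ := fun i j =>
      if (i : ℕ) ≤ (j : ℕ) then
        (-1 : ℝ) ^ ((i : ℕ) + (j : ℕ)) * (Nat.choose (j : ℕ) (i : ℕ) : ℝ) else 0
    let D : Matrix (Fin J) (Fin J) ℝ :=
      Matrix.diagonal fun j => (p - ((j : ℕ) : ℝ) - 2) / (p - 2)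
    L * R = 1 ∧ M = R * D * L := by
  intro M L R D
  have hJ1 : (1:ℝ) ≤ (J:ℝ) := by exact_mod_cast hJ
  have hp2 : p - 2 ≠ 0 := by nlinarith
  constructor
  · ext i j
    rw [Matrix.mul_apply, Matrix.one_apply]
    simp only [L, R]
    rw [Fin.sum_univ_eq_sum_range (fun k =>
      (if (i:ℕ) ≤ k then (Nat.choose k (i:ℕ) : ℝ) else 0) *
      (if k ≤ (j:ℕ) then (-1:ℝ)^(k + (j:ℕ)) * (Nat.choose (j:ℕ) k : ℝ) else 0)) J]
    rw [← Finset.sum_subset (Finset.range_subset_range.2 (show (j:ℕ)+1 ≤ J by omega)) (by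
      intro k hk hk2
      simp only [Finset.mem_range] at hk hk2
      rw [if_neg (show ¬ k ≤ (j:ℕ) by omega), mul_zero])]
    have key : ∑ k ∈ Finset.range ((j:ℕ)+1),
        ((if (i:ℕ) ≤ k then (Nat.choose k (i:ℕ) : ℝ) else 0) *
         (if k ≤ (j:ℕ) then (-1:ℝ)^(k + (j:ℕ)) * (Nat.choose (j:ℕ) k : ℝ) else 0))
        = (-1:ℝ)^((i:ℕ)+(j:ℕ)) * (if (i:ℕ) = (j:ℕ) then 1 else 0) := by
      rw [← coreR (i:ℕ) (j:ℕ), Finset.mul_sum]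
      apply Finset.sum_congr rfl
      intro k hk
      simp only [Finset.mem_range] at hk
      rw [if_pos (show k ≤ (j:ℕ) by omega)]
      by_cases h : (i:ℕ) ≤ k
      · rw [if_pos h, if_pos h]
        have hs : (-1:ℝ)^(k+(j:ℕ)) = (-1:ℝ)^((i:ℕ)+(j:ℕ)) * (-1:ℝ)^((i:ℕ)+k) := by
          have e1 : (-1:ℝ)^((i:ℕ)+(j:ℕ)) * (-1:ℝ)^((i:ℕ)+k)
              = (-1:ℝ)^(2*(i:ℕ)+(k+(j:ℕ))) := by
            rw [← pow_add]; congr 1; ring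
          rw [e1]
          conv_rhs => rw [pow_add, pow_mul]
          norm_num
        rw [hs]; ring
      · rw [if_neg h, if_neg h]; ring
    rw [key]
    by_cases h : i = j
    · have h' : (i:ℕ) = (j:ℕ) := by rw [h]
      rw [if_pos h, if_pos h', h', show (j:ℕ)+(j:ℕ) = 2*(j:ℕ) by ring, pow_mul]
      norm_num
    · have h' : ¬ (i:ℕ) = (j:ℕ) := fun hc => h (Fin.ext hc)
      rw [if_neg h, if_neg h', mul_zero]
  · ext i j
    have hRDL : (R * D * L) i j
        = ∑ k : Fin J, R i k * ((p - ((k:ℕ):ℝ) - 2)/(p-2)) * L k j := by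
      rw [Matrix.mul_apply]
      apply Finset.sum_congr rfl
      intro k _
      rw [Matrix.mul_diagonal]
    rw [hRDL]
    simp only [M, L, R]
    rw [Fin.sum_univ_eq_sum_range (fun k =>
      (if (i:ℕ) ≤ k then (-1:ℝ)^((i:ℕ) + k) * (Nat.choose k (i:ℕ) : ℝ) else 0) *
        ((p - (k:ℝ) - 2)/(p-2)) *
      (if k ≤ (j:ℕ) then (Nat.choose (j:ℕ) k : ℝ) else 0)) J]
    rw [← Finset.sum_subset (Finset.range_subset_range.2 (show (j:ℕ)+1 ≤ J by omega)) (by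
      intro k hk hk2
      simp only [Finset.mem_range] at hk hk2
      rw [if_neg (show ¬ k ≤ (j:ℕ) by omega), mul_zero])]
    have key : ∑ k ∈ Finset.range ((j:ℕ)+1),
        ((if (i:ℕ) ≤ k then (-1:ℝ)^((i:ℕ) + k) * (Nat.choose k (i:ℕ) : ℝ) else 0) *
          ((p - (k:ℝ) - 2)/(p-2)) *
         (if k ≤ (j:ℕ) then (Nat.choose (j:ℕ) k : ℝ) else 0))
        = (if (i:ℕ) = (j:ℕ) then 1 else 0)
          - (1/(p-2)) * ((if (i:ℕ) = (j:ℕ) then ((i:ℕ):ℝ) else 0)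
              - (if (i:ℕ) + 1 = (j:ℕ) then ((i:ℕ):ℝ) + 1 else 0)) := by
      rw [← coreR (i:ℕ) (j:ℕ), ← core2R (i:ℕ) (j:ℕ), Finset.mul_sum,
        ← Finset.sum_sub_distrib]
      apply Finset.sum_congr rfl
      intro k hk
      simp only [Finset.mem_range] at hk
      rw [if_pos (show k ≤ (j:ℕ) by omega)]
      by_cases h : (i:ℕ) ≤ k
      · rw [if_pos h, if_pos h, if_pos h]
        field_simp
        ring
      · rw [if_neg h, if_neg h, if_neg h]; ring
    rw [key]
    by_cases h1 : (j:ℕ) = (i:ℕ)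
    · rw [if_pos h1, if_pos (show (i:ℕ) = (j:ℕ) from h1.symm),
        if_pos (show (i:ℕ) = (j:ℕ) from h1.symm),
        if_neg (show ¬ (i:ℕ) + 1 = (j:ℕ) from by omega)]
      field_simp
      ring
    · rw [if_neg h1, if_neg (show ¬ (i:ℕ) = (j:ℕ) from by omega),
        if_neg (show ¬ (i:ℕ) = (j:ℕ) from by omega)]
      by_cases h2 : (j:ℕ) = (i:ℕ) + 1
      · rw [if_pos h2, if_pos (show (i:ℕ) + 1 = (j:ℕ) from h2.symm)]
        field_simp
        ring
      · rw [if_neg h2, if_neg (show ¬ (i:ℕ) + 1 = (j:ℕ) from by omega)]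
        ring
end
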